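/- arXiv:2008.11018 — 2 statements merged into one kernel-verified Lean document; each statement's English description precedes it below -/
import Mathlib

section
/- Let n ≥ 1, 1 ≤ k ≤ n, and let A be a real symmetric n×n matrix whose vector of eigenvalues λ(A) = (λ₁,…,λₙ) belongs to the Gårding cone Γ_k. Then the Newton transformation P_{k−1}(A) is positive definite. -/
/-!
Write `σ_p(λ | i)` for the `p`-th elementary symmetric function of `λ` with its `i`-th entry
deleted. Since `σ_{p+1}(λ) = σ_{p+1}(λ | i) + λ_i σ_p(λ | i)`, diagonalising `A` by an orthogonal
matrix turns `P_{k-1}(A)` into the diagonal matrix with entries `σ_{k-1}(λ | i)`. So it suffices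
that `Γ_k` lies in the set `U` where `σ_p(λ | i) > 0` for all `i` and all `p < k`. This `U` is open
and contains `(1,…,1)`, and it is closed in `{σ_k > 0}`: at a boundary point of `U` all
`σ_p(λ | i)` are `≥ 0`, and if one of them vanished, the "no gap" property of the elementary
symmetric functions of reals (`σ_0, …, σ_r ≥ 0` and `σ_r = 0` imply `σ_{r+1} ≤ 0`) would give `σ_{k-1}(λ | i) = 0` and
`σ_k(λ | i) ≤ 0`, hence `σ_k(λ) ≤ 0`. Therefore `U` contains the connected component `Γ_k`.
-/

open Matrix

/-- The `k`-th elementary symmetric function of `l = (l 0, …, l (n-1)) ∈ ℝⁿ`. -/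
noncomputable def esymm (n k : ℕ) (l : Fin n → ℝ) : ℝ :=
  ∑ s ∈ Finset.powersetCard k (Finset.univ : Finset (Fin n)), ∏ i ∈ s, l i

/-- The Gårding cone `Γ_k ⊆ ℝⁿ`: the connected component of `{λ : σ_k(λ) > 0}`
containing the vector `(1,…,1)`. -/
noncomputable def gardingCone (n k : ℕ) : Set (Fin n → ℝ) :=
  connectedComponentIn {l : Fin n → ℝ | 0 < esymm n k l} (fun _ => 1)

/-- The Newton transformations associated to a matrix `A` and a sequence `σ` of scalars
(to be taken as the elementary symmetric functions of the eigenvalues of `A`):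
`P₀ = I`, `P_k = σ_k • I - A * P_{k-1}`. -/
noncomputable def newton {n : ℕ} (A : Matrix (Fin n) (Fin n) ℝ) (σ : ℕ → ℝ) :
    ℕ → Matrix (Fin n) (Fin n) ℝ
  | 0 => 1
  | k + 1 => σ (k + 1) • (1 : Matrix (Fin n) (Fin n) ℝ) - A * newton A σ k

open Polynomial

namespace Multiset

variable {R : Type*}

@[simp]
theorem esymm_zero [CommSemiring R] (s : Multiset R) : s.esymm 0 = 1 := by
  simp [esymm]

theorem esymm_eq_zero_of_card_lt [CommSemiring R] {s : Multiset R} {p : ℕ} (h : card s < p) :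
    s.esymm p = 0 := by
  simp [esymm, powersetCard_eq_empty _ h]

theorem esymm_cons_succ [CommSemiring R] (a : R) (s : Multiset R) (p : ℕ) :
    (a ::ₘ s).esymm (p + 1) = s.esymm (p + 1) + a * s.esymm p := by
  simp [esymm, powersetCard_cons, ← sum_map_mul_left]

theorem esymm_pos [CommSemiring R] [PartialOrder R] [IsStrictOrderedRing R] {s : Multiset R}
    (h : ∀ x ∈ s, 0 < x) {p : ℕ} (hp : p ≤ card s) : 0 < s.esymm p := by
  have hne : powersetCard p s ≠ 0 := fun h0 => by
    simpa [Nat.choose_eq_zero_iff, not_lt.mpr hp] using congrArg card h0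
  simpa [esymm] using sum_lt_sum_of_nonempty (f := fun _ => (0 : R)) (g := prod) hne
    fun t ht => prod_pos fun x hx => h x (mem_of_le (mem_powersetCard.mp ht).1 hx)

end Multiset

namespace Polynomial

section ProdXAddC

variable {R : Type*} [CommRing R] (s : Multiset R)

theorem prod_X_add_C_eq_prod_X_sub_C :
    (s.map fun a => X + C a).prod = ((s.map Neg.neg).map fun a => X - C a).prod := by
  simp [Multiset.map_map, sub_eq_add_neg]

variable [IsDomain R]

theorem natDegree_prod_X_add_C : (s.map fun a => X + C a).prod.natDegree = Multiset.card s := by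
  rw [prod_X_add_C_eq_prod_X_sub_C, natDegree_multiset_prod_X_sub_C_eq_card, Multiset.card_map]

theorem card_roots_prod_X_add_C_eq_natDegree :
    Multiset.card (s.map fun a => X + C a).prod.roots =
      (s.map fun a => X + C a).prod.natDegree := by
  rw [natDegree_prod_X_add_C, prod_X_add_C_eq_prod_X_sub_C, roots_multiset_prod_X_sub_C,
    Multiset.card_map]

end ProdXAddC

theorem card_roots_derivative_eq_natDegree {P : ℝ[X]}
    (hP : Multiset.card P.roots = P.natDegree) :
    Multiset.card (derivative P).roots = (derivative P).natDegree :=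
  le_antisymm (card_roots' _) <| by
    have := card_roots_le_derivative P
    have := natDegree_derivative_le P
    omega

theorem card_roots_iterate_derivative_eq_natDegree {P : ℝ[X]}
    (hP : Multiset.card P.roots = P.natDegree) (j : ℕ) :
    Multiset.card (derivative^[j] P).roots = (derivative^[j] P).natDegree := by
  induction j with
  | zero => exact hP
  | succ j ih =>
    simpa only [Function.iterate_succ_apply'] using card_roots_derivative_eq_natDegree ih

theorem eval_pos_of_coeff_nonneg {P : ℝ[X]} (hnn : ∀ t, 0 ≤ P.coeff t) (h0 : 0 < P.coeff 0)
    {x : ℝ} (hx : 0 ≤ x) : 0 < P.eval x := by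
  rw [eval_eq_sum_range]
  exact Finset.sum_pos' (fun t _ => mul_nonneg (hnn t) (pow_nonneg hx t))
    ⟨0, Finset.mem_range.mpr (Nat.succ_pos _), by simpa using h0⟩

theorem coeff_pos_of_card_roots_eq {P : ℝ[X]} (hroots : Multiset.card P.roots = P.natDegree)
    (hnn : ∀ t, 0 ≤ P.coeff t) (h0 : 0 < P.coeff 0) {t : ℕ} (ht : t ≤ P.natDegree) :
    0 < P.coeff t := by
  have hP : P ≠ 0 := fun h => by simp [h] at h0
  have hneg : ∀ a ∈ P.roots.map Neg.neg, 0 < a := by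
    simp only [Multiset.mem_map, forall_exists_index, and_imp, forall_apply_eq_imp_iff₂,
      Left.neg_pos_iff]
    intro a ha
    by_contra! hnonneg
    exact (eval_pos_of_coeff_nonneg hnn h0 hnonneg).ne' ((mem_roots hP).mp ha)
  have hlc : 0 < P.leadingCoeff := (hnn _).lt_of_ne' (leadingCoeff_ne_zero.mpr hP)
  have hroots_neg : P.roots = (P.roots.map Neg.neg).map Neg.neg := by simp
  rw [← C_leadingCoeff_mul_prod_multiset_X_sub_C hroots, coeff_C_mul, hroots_neg,
    ← prod_X_add_C_eq_prod_X_sub_C, Multiset.prod_X_add_C_coeff _ (by simpa [hroots] using ht)]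
  exact mul_pos hlc (Multiset.esymm_pos hneg (Nat.sub_le _ _))

end Polynomial

namespace Multiset

/- Differentiate `∏ (X + a)` down to degree `r + 1`: by Rolle it stays real-rooted, and its
coefficients are positive multiples of `σ_{r+1}, …, σ_0`. If `σ_{r+1} > 0` it has no root in
`[0, ∞)`, so all its roots are negative and all its coefficients positive, contradicting
`σ_r = 0`. -/
theorem esymm_succ_nonpos_of_esymm_eq_zero (s : Multiset ℝ) {r : ℕ}
    (hnn : ∀ q ≤ r, 0 ≤ s.esymm q) (h0 : s.esymm r = 0) : s.esymm (r + 1) ≤ 0 := by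
  by_contra! hpos
  have hr : r + 1 ≤ card s := by
    by_contra! h
    exact hpos.ne' (esymm_eq_zero_of_card_lt h)
  set j := card s - (r + 1)
  set P := derivative^[j] (s.map fun a => X + C a).prod
  have hcoeff : ∀ t ≤ r + 1, P.coeff t = (t + j).descFactorial j * s.esymm (r + 1 - t) := by
    intro t ht
    rw [coeff_iterate_derivative, prod_X_add_C_coeff s (by omega), nsmul_eq_mul]
    congr 2
    omega
  have hvanish : ∀ t, r + 1 < t → P.coeff t = 0 := by
    intro t ht
    have hdeg : (s.map fun a => X + C a).prod.natDegree < t + j := by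
      rw [natDegree_prod_X_add_C]; omega
    rw [coeff_iterate_derivative, coeff_eq_zero_of_natDegree_lt hdeg, smul_zero]
  have hdesc : ∀ t, (0 : ℝ) < (t + j).descFactorial j := fun t => by
    exact_mod_cast Nat.descFactorial_pos.mpr (Nat.le_add_left j t)
  have hnnP : ∀ t, 0 ≤ P.coeff t := by
    intro t
    rcases le_or_gt t (r + 1) with ht | ht
    · rw [hcoeff t ht]
      refine mul_nonneg (hdesc t).le ?_
      rcases t with _ | t
      · exact hpos.le
      · exact hnn _ (by omega)
    · exact (hvanish t ht).ge
  have hP0 : 0 < P.coeff 0 := by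
    rw [hcoeff 0 (by omega)]
    exact mul_pos (hdesc 0) hpos
  have hdeg : 1 ≤ P.natDegree := by
    refine le_trans (by omega) (le_natDegree_of_ne_zero (n := r + 1) ?_)
    rw [hcoeff _ le_rfl, Nat.sub_self, esymm_zero, mul_one]
    exact (hdesc _).ne'
  have h1 := coeff_pos_of_card_roots_eq (card_roots_iterate_derivative_eq_natDegree
    (card_roots_prod_X_add_C_eq_natDegree s) j) hnnP hP0 hdeg
  rw [hcoeff 1 (by omega), Nat.add_sub_cancel, h0, mul_zero] at h1
  exact h1.false

theorem esymm_nonpos_of_esymm_eq_zero (s : Multiset ℝ) {r p : ℕ} (hrp : r ≤ p)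
    (hnn : ∀ q < p, 0 ≤ s.esymm q) (h0 : s.esymm r = 0) : s.esymm p ≤ 0 := by
  induction p, hrp using Nat.le_induction with
  | base => exact h0.le
  | succ p hrp ih =>
    have hp : s.esymm p = 0 := le_antisymm (ih fun q hq => hnn q (by omega)) (hnn p (by omega))
    exact esymm_succ_nonpos_of_esymm_eq_zero s (fun q hq => hnn q (by omega)) hp

theorem esymm_pos_of_esymm_cons_pos (a : ℝ) (s : Multiset ℝ) {k : ℕ}
    (hnn : ∀ p ≤ k, 0 ≤ s.esymm p) (h : 0 < (a ::ₘ s).esymm (k + 1)) :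
    ∀ p ≤ k, 0 < s.esymm p := by
  intro p hp
  refine (hnn p hp).lt_of_ne' fun h0 => h.not_ge ?_
  have hk : s.esymm k = 0 :=
    le_antisymm (esymm_nonpos_of_esymm_eq_zero s hp (fun q hq => hnn q hq.le) h0) (hnn k le_rfl)
  rw [esymm_cons_succ, hk, mul_zero, add_zero]
  exact esymm_nonpos_of_esymm_eq_zero s (by omega) (fun q hq => hnn q (by omega)) h0

end Multiset

theorem connectedComponentIn_subset_of_isOpen {X : Type*} [TopologicalSpace X] {Ω H : Set X}
    {x : X} (hH : IsOpen H) (hx : x ∈ H) (hcl : Ω ∩ closure H ⊆ H) :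
    connectedComponentIn Ω x ⊆ H := by
  by_cases hxΩ : x ∈ Ω
  · refine isPreconnected_connectedComponentIn.subset_left_of_subset_union hH
      isClosed_closure.isOpen_compl (Set.disjoint_compl_right_iff_subset.mpr subset_closure)
      (fun y hy => ?_)
      ⟨x, mem_connectedComponentIn hxΩ, hx⟩
    by_cases hyH : y ∈ closure H
    · exact Or.inl (hcl ⟨connectedComponentIn_subset _ _ hy, hyH⟩)
    · exact Or.inr hyH
  · simp [connectedComponentIn_eq_empty hxΩ]

open Finset

theorem esymm_eq_multiset_esymm (n k : ℕ) (l : Fin n → ℝ) :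
    esymm n k l = (univ.val.map l).esymm k :=
  (Finset.esymm_map_val l univ k).symm

theorem continuous_esymm_map_val {ι : Type*} (s : Finset ι) (p : ℕ) :
    Continuous fun l : ι → ℝ => (s.val.map l).esymm p := by
  simp_rw [Finset.esymm_map_val]
  fun_prop

def erasedEsymmPos (n k : ℕ) : Set (Fin n → ℝ) :=
  {l | ∀ i, ∀ p ≤ k, 0 < ((univ.erase i).val.map l).esymm p}

theorem isOpen_erasedEsymmPos (n k : ℕ) : IsOpen (erasedEsymmPos n k) := by
  have : erasedEsymmPos n k =
      ⋂ i, ⋂ p ∈ Set.Iic k, {l | 0 < ((univ.erase i).val.map l).esymm p} := by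
    ext; simp [erasedEsymmPos]
  rw [this]
  exact isOpen_iInter_of_finite fun i => (Set.finite_Iic k).isOpen_biInter fun p _ =>
    isOpen_lt continuous_const (continuous_esymm_map_val _ p)

theorem one_mem_erasedEsymmPos {n k : ℕ} (hk : k + 1 ≤ n) : 1 ∈ erasedEsymmPos n k :=
  fun i p hp => Multiset.esymm_pos
    (fun x hx => by obtain ⟨j, -, rfl⟩ := Multiset.mem_map.mp hx; exact one_pos) (by simp; omega)

theorem inter_closure_erasedEsymmPos_subset (n k : ℕ) :
    {l | 0 < esymm n (k + 1) l} ∩ closure (erasedEsymmPos n k) ⊆ erasedEsymmPos n k := by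
  rintro l ⟨hl, hcl⟩ i
  have hnn : ∀ p ≤ k, 0 ≤ ((univ.erase i).val.map l).esymm p := fun p hp =>
    closure_lt_subset_le continuous_const (continuous_esymm_map_val _ p)
      (closure_mono (fun (m : Fin n → ℝ) (hm : m ∈ erasedEsymmPos n k) => hm i p hp) hcl)
  refine Multiset.esymm_pos_of_esymm_cons_pos (l i) _ hnn ?_
  rwa [← Multiset.map_cons, Finset.erase_val, Multiset.cons_erase (Finset.mem_univ_val i),
    ← esymm_eq_multiset_esymm]

theorem gardingCone_succ_subset {n k : ℕ} (hk : k + 1 ≤ n) :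
    gardingCone n (k + 1) ⊆ erasedEsymmPos n k :=
  connectedComponentIn_subset_of_isOpen (isOpen_erasedEsymmPos n k) (one_mem_erasedEsymmPos hk)
    (inter_closure_erasedEsymmPos_subset n k)

section Newton

variable {n : ℕ}

theorem map_newton {F : Type*}
    [FunLike F (Matrix (Fin n) (Fin n) ℝ) (Matrix (Fin n) (Fin n) ℝ)]
    [AlgHomClass F ℝ (Matrix (Fin n) (Fin n) ℝ) (Matrix (Fin n) (Fin n) ℝ)] (φ : F)
    (A : Matrix (Fin n) (Fin n) ℝ) (σ : ℕ → ℝ) (m : ℕ) :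
    φ (newton A σ m) = newton (φ A) σ m := by
  induction m with
  | zero => exact map_one φ
  | succ m ih => simp only [newton, map_sub, map_smul, map_one, map_mul, ih]

theorem newton_diagonal (l : Fin n → ℝ) (m : ℕ) :
    newton (diagonal l) (fun j => esymm n j l) m =
      diagonal fun i => ((univ.erase i).val.map l).esymm m := by
  induction m with
  | zero => simp [newton]
  | succ m ih =>
    ext i j
    rw [newton, ih, diagonal_mul_diagonal, esymm_eq_multiset_esymm,
      ← Multiset.cons_erase (Finset.mem_univ_val i), Multiset.map_cons, Multiset.esymm_cons_succ,
      ← Finset.erase_val]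
    by_cases h : i = j <;> simp [h]

theorem Matrix.IsHermitian.newton_eq {A : Matrix (Fin n) (Fin n) ℝ} (hA : A.IsHermitian) (m : ℕ) :
    newton A (fun j => esymm n j hA.eigenvalues) m =
      Unitary.conjStarAlgAut ℝ _ hA.eigenvectorUnitary
        (diagonal fun i => ((univ.erase i).val.map hA.eigenvalues).esymm m) := by
  rw [← newton_diagonal, map_newton]
  congr 1
  simpa only [RCLike.ofReal_real_eq_id, Function.id_comp] using hA.spectral_theorem

end Newton

theorem newton_posDef_of_garding_general {n : ℕ} (k : ℕ) (hk1 : 1 ≤ k) (hk : k ≤ n)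
    (A : Matrix (Fin n) (Fin n) ℝ) (hA : A.IsHermitian)
    (hl : hA.eigenvalues ∈ gardingCone n k) :
    (newton A (fun j => esymm n j hA.eigenvalues) (k - 1)).PosDef := by
  obtain ⟨k, rfl⟩ := Nat.exists_eq_add_of_le' hk1
  rw [Nat.add_sub_cancel, hA.newton_eq, Unitary.conjStarAlgAut_apply,
    IsUnit.posDef_star_right_conjugate_iff Unitary.isUnit_coe, posDef_diagonal_iff]
  exact fun i => gardingCone_succ_subset hk hl i k le_rfl

/-- If the vector of eigenvalues of a real symmetric matrix `A` lies in the Gårding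
cone `Γ_k`, then the Newton transformation `P_{k-1}(A)` is positive definite
(ellipticity of `L_{k-1}`). -/
theorem newton_posDef_of_garding {n : ℕ} (hn : 1 ≤ n) (k : ℕ) (hk1 : 1 ≤ k) (hk : k ≤ n)
    (A : Matrix (Fin n) (Fin n) ℝ) (hA : A.IsHermitian)
    (hl : hA.eigenvalues ∈ gardingCone n k) :
    (newton A (fun j => esymm n j hA.eigenvalues) (k - 1)).PosDef :=
  newton_posDef_of_garding_general k hk1 hk A hA hl
end

section
/- Let n ≥ 2 and 1 ≤ r ≤ n. For every λ ∈ Γ_r one has n·H₁(λ)·H_r(λ) − (n−r)·H_{r+1}(λ) − r·H_r(λ)^{(r+1)/r} ≥ 0, where by convention H_{n+1} := 0 when r = n. (This is the algebraic inequality that makes L_{r−1}φ ≥ 0 in the proof of the Bernstein theorem for L_{r−1}-parabolic hypersurfaces of constant r-mean curvature in a slab.) -/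
/-- The normalized `k`-th mean curvature function `H_k(λ) = σ_k(λ) / C(n,k)`;
by the above convention `meanH n (n+1) l = 0`. -/
noncomputable def meanH (n k : ℕ) (l : Fin n → ℝ) : ℝ :=
  esymm n k l / (n.choose k : ℝ)

lemma esymm_zero' (n : ℕ) (l : Fin n → ℝ) : esymm n 0 l = 1 := by simp [esymm]

lemma esymm_one_idx (n : ℕ) (l : Fin n → ℝ) : esymm n 1 l = ∑ i, l i := by
  simp [esymm, Finset.powersetCard_one, Finset.sum_map]

lemma esymm_self (n : ℕ) (l : Fin n → ℝ) : esymm n n l = ∏ i, l i := by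
  unfold esymm
  have h : Finset.powersetCard n (Finset.univ : Finset (Fin n)) = {Finset.univ} := by
    have := Finset.powersetCard_self (Finset.univ : Finset (Fin n))
    simpa using this
  rw [h]; simp

lemma esymm_of_gt (n k : ℕ) (h : n < k) (l : Fin n → ℝ) : esymm n k l = 0 := by
  unfold esymm
  rw [Finset.powersetCard_eq_empty.2 (by simpa using h), Finset.sum_empty]

lemma esymm_one_vec (n k : ℕ) : esymm n k (fun _ => 1) = (n.choose k : ℝ) := by
  simp [esymm, Finset.card_powersetCard]

lemma continuous_esymm (n k : ℕ) : Continuous (esymm n k) := by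
  unfold esymm
  exact continuous_finset_sum _ fun s _ => continuous_finset_prod _ fun i _ => continuous_apply i

lemma meanH_zero (n : ℕ) (l : Fin n → ℝ) : meanH n 0 l = 1 := by
  simp [meanH, esymm_zero']

lemma meanH_of_gt (n k : ℕ) (h : n < k) (l : Fin n → ℝ) : meanH n k l = 0 := by
  simp [meanH, esymm_of_gt n k h]

lemma continuous_meanH (n k : ℕ) : Continuous (meanH n k) :=
  (continuous_esymm n k).div_const _

lemma meanH_pos (n k : ℕ) (hk : k ≤ n) (l : Fin n → ℝ) (h : 0 < esymm n k l) :
    0 < meanH n k l :=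
  div_pos h (by exact_mod_cast Nat.choose_pos hk)

lemma esymm_eq (n k : ℕ) (l : Fin n → ℝ) :
    esymm n k l = (Finset.univ.val.map l).esymm k := by
  rw [esymm, Finset.esymm_map_val]

open Polynomial in
lemma exists_contract (m : ℕ) (l : Fin (m + 1) → ℝ) :
    ∃ μ : Fin m → ℝ, ∀ j, j ≤ m →
      ((m : ℝ) + 1) * esymm m j μ = (((m : ℝ) + 1) - (j : ℝ)) * esymm (m + 1) j l := by
  classical
  set s : Multiset ℝ := Finset.univ.val.map l with hs
  have hcards : Multiset.card s = m + 1 := by simp [hs]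
  set p : ℝ[X] := (s.map fun a => X - C a).prod with hp
  have hmonic : p.Monic := monic_multiset_prod_of_monic _ _ fun a _ => monic_X_sub_C a
  have hpdeg : p.natDegree = m + 1 := by
    rw [hp, natDegree_multiset_prod_X_sub_C_eq_card, hcards]
  have hproots : p.roots = s := roots_multiset_prod_X_sub_C s
  set q : ℝ[X] := derivative p with hq
  have hqcoeff : ∀ j : ℕ, q.coeff j = p.coeff (j + 1) * (j + 1) := fun j => coeff_derivative p j
  have hptop : p.coeff (m + 1) = 1 := by
    have := hmonic.coeff_natDegree; rwa [hpdeg] at this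
  have hqtop : q.coeff m = (m : ℝ) + 1 := by rw [hqcoeff m, hptop]; norm_num
  have hqne : q ≠ 0 := fun h => by
    rw [h] at hqtop; simp at hqtop
    have : (0:ℝ) ≤ m := Nat.cast_nonneg m
    nlinarith
  have hqdeg : q.natDegree = m := by
    have h2 := natDegree_derivative_le p
    rw [hpdeg, ← hq] at h2
    have h1 : m ≤ q.natDegree := le_natDegree_of_ne_zero (by rw [hqtop]; positivity)
    omega
  have hqlead : q.leadingCoeff = (m : ℝ) + 1 := by
    rw [leadingCoeff, hqdeg, hqtop]
  have hqroots_card : Multiset.card q.roots = m := by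
    have h1 : Multiset.card q.roots ≤ m := hqdeg ▸ q.card_roots'
    have h2 : Multiset.card p.roots ≤ Multiset.card q.roots + 1 := p.card_roots_le_derivative
    rw [hproots, hcards] at h2
    omega
  set L : List ℝ := q.roots.toList with hL
  have hLlen : L.length = m := by rw [hL, Multiset.length_toList, hqroots_card]
  refine ⟨fun i => L.get ⟨(i : ℕ), by omega⟩, fun j hj => ?_⟩
  have hmap : (Finset.univ.val.map fun i : Fin m => L.get ⟨(i : ℕ), by omega⟩) = q.roots := by
    rw [Fin.univ_val_map]
    have : (List.ofFn fun i : Fin m => L.get ⟨(i : ℕ), by omega⟩) = L := by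
      apply List.ext_getElem (by simp [hLlen])
      intro i h1 h2
      simp [List.getElem_ofFn]
    rw [this, hL, Multiset.coe_toList]
  have hesymm_mu : esymm m j (fun i => L.get ⟨(i : ℕ), by omega⟩) = q.roots.esymm j := by
    rw [esymm_eq, hmap]
  -- coefficient computations
  have hco1 : q.coeff (m - j) = ((m : ℝ) + 1) * (-1) ^ j * q.roots.esymm j := by
    have := Polynomial.coeff_eq_esymm_roots_of_card (hqroots_card.trans hqdeg.symm)
      (k := m - j) (by omega)
    rw [this, hqlead, hqdeg, show m - (m - j) = j by omega]
  have hco2 : q.coeff (m - j) = (-1) ^ j * s.esymm j * ((m : ℝ) + 1 - j) := by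
    rw [hqcoeff (m - j)]
    have hpc : p.coeff (m - j + 1) = (-1) ^ j * s.esymm j := by
      have h := Multiset.prod_X_sub_C_coeff s (k := m - j + 1) (by omega)
      rw [← hp] at h
      rw [h, hcards, show m + 1 - (m - j + 1) = j by omega]
    rw [hpc]
    have : ((m - j : ℕ) : ℝ) = (m : ℝ) - j := by
      push_cast [hj]; ring
    rw [this]; ring
  have hne : ((-1 : ℝ)) ^ j ≠ 0 := by positivity
  have : ((m : ℝ) + 1) * (-1) ^ j * q.roots.esymm j = (-1) ^ j * s.esymm j * ((m : ℝ) + 1 - j) :=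
    hco1 ▸ hco2 ▸ rfl
  rw [hesymm_mu, esymm_eq, ← hs]
  have h : (-1:ℝ) ^ j * (((m : ℝ) + 1) * q.roots.esymm j)
      = (-1:ℝ) ^ j * ((((m : ℝ) + 1) - j) * s.esymm j) := by linear_combination this
  exact mul_left_cancel₀ hne h

lemma choose_ident (m j : ℕ) : (m + 1) * m.choose j = (m + 1).choose j * (m + 1 - j) := by
  rw [Nat.mul_comm]; exact Nat.choose_mul_succ_eq m j

lemma meanH_contract (m : ℕ) (l : Fin (m + 1) → ℝ) :
    ∃ μ : Fin m → ℝ, ∀ j, j ≤ m → meanH m j μ = meanH (m + 1) j l := by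
  obtain ⟨μ, he⟩ := exists_contract m l
  refine ⟨μ, fun j hj => ?_⟩
  have e := he j hj
  have ident : ((m : ℝ) + 1) * (m.choose j : ℝ)
      = ((m + 1).choose j : ℝ) * (((m : ℝ) + 1) - j) := by
    have h0 := congrArg (Nat.cast : ℕ → ℝ) (choose_ident m j)
    have hle : j ≤ m + 1 := by omega
    push_cast [Nat.cast_sub hle] at h0
    linarith [h0]
  have hcm : (0 : ℝ) < (m.choose j : ℝ) := by exact_mod_cast Nat.choose_pos hj
  have hc : (0 : ℝ) < ((m + 1).choose j : ℝ) := by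
    exact_mod_cast Nat.choose_pos (by omega : j ≤ m + 1)
  have hd : (0 : ℝ) < ((m : ℝ) + 1) - j := by
    have : (j : ℝ) ≤ m := by exact_mod_cast hj
    linarith
  unfold meanH
  rw [div_eq_div_iff (ne_of_gt hcm) (ne_of_gt hc)]
  apply mul_left_cancel₀ (ne_of_gt hd)
  linear_combination (m.choose j : ℝ) * e - (esymm m j μ) * ident

lemma newton0 : ∀ n, 2 ≤ n → ∀ l : Fin n → ℝ, meanH n 2 l ≤ meanH n 1 l ^ 2 := by
  intro n hn
  induction n, hn using Nat.le_induction with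
  | base =>
    intro l
    have h2 : esymm 2 2 l = l 0 * l 1 := by rw [esymm_self]; simp [Fin.prod_univ_two]
    have h1 : esymm 2 1 l = l 0 + l 1 := by rw [esymm_one_idx]; simp [Fin.sum_univ_two]
    simp only [meanH, h1, h2, Nat.choose_self, Nat.choose_one_right, Nat.cast_ofNat, Nat.cast_one]
    rw [div_one]
    nlinarith [sq_nonneg (l 0 - l 1)]
  | succ m hm IH =>
    intro l
    obtain ⟨μ, hμ⟩ := meanH_contract m l
    rw [← hμ 2 (by omega), ← hμ 1 (by omega)]
    exact IH μ

lemma esymm_inv (n j : ℕ) (hj : j ≤ n) (l : Fin n → ℝ) (hl : ∀ i, l i ≠ 0) :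
    esymm n j (fun i => (l i)⁻¹) * ∏ i, l i = esymm n (n - j) l := by
  unfold esymm
  rw [Finset.sum_mul]
  refine Finset.sum_nbij' (i := fun s => sᶜ) (j := fun s => sᶜ) ?_ ?_ ?_ ?_ ?_
  · intro s hs
    rw [Finset.mem_powersetCard_univ] at hs ⊢
    rw [Finset.card_compl, hs, Fintype.card_fin]
  · intro s hs
    rw [Finset.mem_powersetCard_univ] at hs ⊢
    rw [Finset.card_compl, hs, Fintype.card_fin]
    omega
  · intro s _; exact compl_compl s
  · intro s _; exact compl_compl s
  · intro s hs
    rw [← Finset.prod_mul_prod_compl s l, ← mul_assoc]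
    have : (∏ i ∈ s, (l i)⁻¹) * ∏ i ∈ s, l i = 1 := by
      rw [← Finset.prod_mul_distrib]
      exact Finset.prod_eq_one fun i _ => inv_mul_cancel₀ (hl i)
    rw [this, one_mul]

theorem newtonH (n : ℕ) : ∀ k, k + 2 ≤ n → ∀ l : Fin n → ℝ,
    meanH n k l * meanH n (k + 2) l ≤ meanH n (k + 1) l ^ 2 := by
  induction n using Nat.strong_induction_on with
  | _ n IH =>
  intro k hk l
  rcases Nat.eq_zero_or_pos k with rfl | hkpos
  · rw [meanH_zero, one_mul]
    exact newton0 n hk l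
  by_cases hkn : k + 2 < n
  · obtain ⟨m, rfl⟩ : ∃ m, n = m + 1 := ⟨n - 1, by omega⟩
    obtain ⟨μ, hμ⟩ := meanH_contract m l
    rw [← hμ k (by omega), ← hμ (k + 1) (by omega), ← hμ (k + 2) (by omega)]
    exact IH m (by omega) k (by omega) μ
  · have hn : k + 2 = n := by omega
    subst hn
    by_cases hz : ∀ i, l i ≠ 0
    · set μ : Fin (k + 2) → ℝ := fun i => (l i)⁻¹ with hμdef
      have base := newton0 (k + 2) (by omega) μ
      set P : ℝ := ∏ i, l i with hP
      have e2 : esymm (k + 2) 2 μ * P = esymm (k + 2) k l := by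
        have := esymm_inv (k + 2) 2 (by omega) l hz
        rwa [show k + 2 - 2 = k by omega] at this
      have e1 : esymm (k + 2) 1 μ * P = esymm (k + 2) (k + 1) l := by
        have := esymm_inv (k + 2) 1 (by omega) l hz
        rwa [show k + 2 - 1 = k + 1 by omega] at this
      have hck : (k + 2).choose k = (k + 2).choose 2 := by
        rw [show k = k + 2 - 2 by omega]
        exact Nat.choose_symm (by omega)
      have hck1 : (k + 2).choose (k + 1) = (k + 2).choose 1 := by
        rw [show k + 1 = k + 2 - 1 by omega]
        exact Nat.choose_symm (by omega)
      have hself : esymm (k + 2) (k + 2) l = P := by rw [esymm_self]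
      unfold meanH at base ⊢
      rw [hck, hck1, hself, Nat.choose_self, Nat.cast_one, div_one, ← e2, ← e1]
      have key := mul_le_mul_of_nonneg_right base (sq_nonneg P)
      calc esymm (k + 2) 2 μ * P / ((k + 2).choose 2 : ℝ) * P
          = esymm (k + 2) 2 μ / ((k + 2).choose 2 : ℝ) * P ^ 2 := by ring
        _ ≤ (esymm (k + 2) 1 μ / ((k + 2).choose 1 : ℝ)) ^ 2 * P ^ 2 := key
        _ = (esymm (k + 2) 1 μ * P / ((k + 2).choose 1 : ℝ)) ^ 2 := by ring
    · push_neg at hz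
      obtain ⟨i0, hi0⟩ := hz
      have hzero : meanH (k + 2) (k + 2) l = 0 := by
        rw [meanH, esymm_self, Finset.prod_eq_zero (Finset.mem_univ i0) hi0, zero_div]
      rw [hzero, mul_zero]
      exact sq_nonneg _

lemma chain (n : ℕ) (hn : 2 ≤ n) (l : Fin n → ℝ) :
    ∀ j, 1 ≤ j → j ≤ n → (∀ i, 1 ≤ i → i ≤ j → 0 < meanH n i l) →
      meanH n (j + 1) l ≤ meanH n 1 l * meanH n j l := by
  intro j
  induction j with
  | zero => omega
  | succ j IHj =>
    intro _ hjn hpos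
    rcases Nat.eq_zero_or_pos j with rfl | hj1
    · have := newtonH n 0 hn l
      rw [meanH_zero, one_mul] at this
      calc meanH n (0 + 1 + 1) l = meanH n 2 l := by norm_num
        _ ≤ meanH n 1 l ^ 2 := this
        _ = meanH n 1 l * meanH n (0 + 1) l := by ring_nf
    · -- j ≥ 1, index j+1; want meanH (j+2) ≤ meanH 1 * meanH (j+1)
      have h1 : 0 < meanH n 1 l := hpos 1 le_rfl (by omega)
      have hj : 0 < meanH n j l := hpos j hj1 (by omega)
      have hj2 : 0 < meanH n (j + 1) l := hpos (j + 1) (by omega) le_rfl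
      have IH : meanH n (j + 1) l ≤ meanH n 1 l * meanH n j l :=
        IHj hj1 (by omega) (fun i h1i h2i => hpos i h1i (by omega))
      by_cases hcase : j + 1 + 1 ≤ n
      · have newt := newtonH n j hcase l
        nlinarith [mul_nonneg (sub_nonneg.2 IH) hj2.le]
      · have : meanH n (j + 1 + 1) l = 0 := meanH_of_gt n (j + 1 + 1) (by omega) l
        rw [this]
        positivity

lemma maclaurin (n : ℕ) (hn : 2 ≤ n) (l : Fin n → ℝ) :
    ∀ j, 1 ≤ j → j ≤ n → (∀ i, 1 ≤ i → i ≤ j → 0 < meanH n i l) →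
      meanH n j l ≤ meanH n 1 l ^ j := by
  intro j hj1
  induction j, hj1 using Nat.le_induction with
  | base => intro _ _; rw [pow_one]
  | succ j hj1 IHj =>
    intro hjn hpos
    have h1 : 0 < meanH n 1 l := hpos 1 le_rfl (by omega)
    have step : meanH n (j + 1) l ≤ meanH n 1 l * meanH n j l :=
      chain n hn l j hj1 (by omega) (fun i hi1 hi2 => hpos i hi1 (by omega))
    have IH : meanH n j l ≤ meanH n 1 l ^ j :=
      IHj (by omega) (fun i hi1 hi2 => hpos i hi1 (by omega))
    calc meanH n (j + 1) l ≤ meanH n 1 l * meanH n j l := step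
      _ ≤ meanH n 1 l * meanH n 1 l ^ j := by nlinarith
      _ = meanH n 1 l ^ (j + 1) := by ring

lemma cone_pos (n r : ℕ) (hn : 2 ≤ n) (hr1 : 1 ≤ r) (hr : r ≤ n)
    (l : Fin n → ℝ) (hl : l ∈ gardingCone n r) :
    ∀ j, 1 ≤ j → j ≤ r → 0 < esymm n j l := by
  classical
  set S : Set (Fin n → ℝ) := {v | 0 < esymm n r v} with hS
  set Q : Set (Fin n → ℝ) := {v | ∀ j, 1 ≤ j → j ≤ r → 0 < esymm n j v} with hQ
  have hQopen : IsOpen Q := by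
    have hQeq : Q = ⋂ j ∈ Finset.Icc 1 r, {v : Fin n → ℝ | 0 < esymm n j v} := by
      ext v
      simp only [hQ, Set.mem_setOf_eq, Set.mem_iInter, Finset.mem_Icc]
      constructor
      · intro h j hj; exact h j hj.1 hj.2
      · intro h j h1 h2; exact h j ⟨h1, h2⟩
    rw [hQeq]
    exact isOpen_biInter_finset fun j _ =>
      isOpen_lt continuous_const (continuous_esymm n j)
  have hkey : ∀ v ∈ closure Q, 0 < esymm n r v → v ∈ Q := by
    intro v hv hvr
    have hnonneg : ∀ j, 1 ≤ j → j ≤ r → 0 ≤ esymm n j v := fun j h1 h2 =>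
      closure_minimal (fun w hw => (hw j h1 h2).le)
        (isClosed_le continuous_const (continuous_esymm n j)) hv
    have hineq : ∀ i, 1 ≤ i → i + 1 ≤ r →
        meanH n (i + 1) v ≤ meanH n 1 v * meanH n i v := by
      intro i h1 h2
      refine closure_minimal (fun w hw => ?_)
        (isClosed_le (continuous_meanH n (i + 1))
          ((continuous_meanH n 1).mul (continuous_meanH n i))) hv
      exact chain n hn w i h1 (by omega)
        (fun t ht1 ht2 => meanH_pos n t (by omega) w (hw t ht1 (by omega)))
    have hdown : ∀ d, d ≤ r - 1 → 0 < esymm n (r - d) v := by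
      intro d
      induction d with
      | zero => intro _; simpa using hvr
      | succ d IHd =>
        intro hd
        have hprev : 0 < esymm n (r - d) v := IHd (by omega)
        set i := r - d - 1 with hi
        have hi1 : 1 ≤ i := by omega
        have hIp : 0 < esymm n (i + 1) v := by
          rw [show i + 1 = r - d by omega]; exact hprev
        rcases lt_or_eq_of_le (hnonneg i hi1 (by omega)) with h | h
        · rw [show r - (d + 1) = i by omega]; exact h
        · exfalso
          have hm0 : meanH n i v = 0 := by rw [meanH, ← h, zero_div]
          have hle := hineq i hi1 (by omega)
          rw [hm0, mul_zero] at hle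
          have hpos := meanH_pos n (i + 1) (by omega) v hIp
          linarith
    intro j h1 h2
    have := hdown (r - j) (by omega)
    rwa [show r - (r - j) = j by omega] at this
  have hCpre : IsPreconnected (gardingCone n r) := isPreconnected_connectedComponentIn
  have hCS : gardingCone n r ⊆ S := connectedComponentIn_subset _ _
  have h1S : (fun _ : Fin n => (1 : ℝ)) ∈ S := by
    have : (0 : ℝ) < (n.choose r : ℝ) := by exact_mod_cast Nat.choose_pos hr
    simpa [hS, esymm_one_vec] using this
  have h1C : (fun _ : Fin n => (1 : ℝ)) ∈ gardingCone n r := mem_connectedComponentIn h1S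
  have h1Q : (fun _ : Fin n => (1 : ℝ)) ∈ Q := by
    intro j h1 h2
    rw [esymm_one_vec]
    exact_mod_cast Nat.choose_pos (le_trans h2 hr)
  suffices hQl : l ∈ Q from hQl
  by_contra hlQ
  have hlnc : l ∉ closure Q := fun hc => hlQ (hkey l hc (hCS hl))
  obtain ⟨w, hwC, hwQ, hwnc⟩ := hCpre Q (closure Q)ᶜ hQopen isClosed_closure.isOpen_compl
    (fun v hv => by
      by_cases h : v ∈ closure Q
      · exact Or.inl (hkey v h (hCS hv))
      · exact Or.inr h)
    ⟨_, h1C, h1Q⟩ ⟨l, hl, hlnc⟩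
  exact hwnc (subset_closure hwQ)

/-- For `n ≥ 2`, `1 ≤ r ≤ n` and `λ ∈ Γ_r`,
`n·H₁(λ)·H_r(λ) − (n−r)·H_{r+1}(λ) − r·H_r(λ)^{(r+1)/r} ≥ 0`
(with the convention `H_{n+1} = 0` when `r = n`). -/
theorem key_algebraic_inequality (n r : ℕ) (hn : 2 ≤ n) (hr1 : 1 ≤ r) (hr : r ≤ n)
    (l : Fin n → ℝ) (hl : l ∈ gardingCone n r) :
    0 ≤ (n : ℝ) * meanH n 1 l * meanH n r l - ((n : ℝ) - (r : ℝ)) * meanH n (r + 1) l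
        - (r : ℝ) * meanH n r l ^ (((r : ℝ) + 1) / (r : ℝ)) := by
  have hpos : ∀ j, 1 ≤ j → j ≤ r → 0 < meanH n j l := fun j h1 h2 =>
    meanH_pos n j (le_trans h2 hr) l (cone_pos n r hn hr1 hr l hl j h1 h2)
  have h1 : 0 < meanH n 1 l := hpos 1 le_rfl hr1
  have hR : 0 < meanH n r l := hpos r hr1 le_rfl
  have hA : meanH n (r + 1) l ≤ meanH n 1 l * meanH n r l :=
    chain n hn l r hr1 hr hpos
  have hB : meanH n r l ≤ meanH n 1 l ^ r :=
    maclaurin n hn l r hr1 hr hpos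
  have hrR : (0 : ℝ) < (r : ℝ) := by exact_mod_cast hr1
  have hexp : ((r : ℝ) + 1) / (r : ℝ) = 1 + 1 / (r : ℝ) := by field_simp
  have hsplit : meanH n r l ^ (((r : ℝ) + 1) / (r : ℝ))
      = meanH n r l * meanH n r l ^ (1 / (r : ℝ)) := by
    rw [hexp, Real.rpow_add hR, Real.rpow_one]
  have hC : meanH n r l ^ (1 / (r : ℝ)) ≤ meanH n 1 l := by
    have step1 : meanH n r l ^ (1 / (r : ℝ)) ≤ (meanH n 1 l ^ r) ^ (1 / (r : ℝ)) :=
      Real.rpow_le_rpow hR.le hB (by positivity)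
    have step2 : (meanH n 1 l ^ r) ^ (1 / (r : ℝ)) = meanH n 1 l := by
      rw [← Real.rpow_natCast (meanH n 1 l) r, ← Real.rpow_mul h1.le,
        mul_one_div, div_self (ne_of_gt hrR), Real.rpow_one]
    linarith [step1, step2 ▸ step1]
  rw [hsplit]
  have hnr : (r : ℝ) ≤ (n : ℝ) := by exact_mod_cast hr
  nlinarith [mul_nonneg (sub_nonneg.2 hnr) (sub_nonneg.2 hA),
    mul_nonneg (mul_nonneg hrR.le hR.le) (sub_nonneg.2 hC)]
end
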